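/- Let G be a split graph on vertices {1,…,n} with partition into a clique C and a stable set S. Let A, B ⊆ C and U ⊆ S be such that A ∪ U and B ∪ U are cliques of G, and let ε ∈ {+1,−1}. Then, as subsets of the Hansen polytope H(G), [ε, A ∪ U] ∩ [ε, B ∪ U] = [ε, (A ∩ B) ∪ U] ∩ [ε, A ∪ B ∪ U]. -/

import Mathlib

/-- A finset of vertices is stable (independent) in `G` if no two of its elements are adjacent. -/
def IsStable {n : ℕ} (G : SimpleGraph (Fin n)) (I : Finset (Fin n)) : Prop :=
  ∀ ⦃a⦄, a ∈ I → ∀ ⦃b⦄, b ∈ I → ¬ G.Adj a b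

/-- The point `e_0 + ∑_{i ∈ I} e_i ∈ ℝ^{n+1}`. -/
def hansenVert {n : ℕ} (I : Finset (Fin n)) : Fin (n + 1) → ℝ :=
  fun j => Fin.cases 1 (fun i => if i ∈ I then 1 else 0) j

/-- The Hansen polytope of `G`. -/
def hansenPolytope {n : ℕ} (G : SimpleGraph (Fin n)) : Set (Fin (n + 1) → ℝ) :=
  convexHull ℝ
    {x | ∃ I : Finset (Fin n), IsStable G I ∧ (x = hansenVert I ∨ x = -hansenVert I)}

/-- The face `[ε, K] = { x ∈ H(G) : ε·(−x_0 + 2·∑_{i ∈ K} x_i) = 1 }` of the Hansen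
polytope, for a sign `ε` and a clique `K`. -/
def hFace {n : ℕ} (G : SimpleGraph (Fin n)) (ε : ℝ) (K : Finset (Fin n)) :
    Set (Fin (n + 1) → ℝ) :=
  {x ∈ hansenPolytope G | ε * (-(x 0) + 2 * (∑ i ∈ K, x i.succ)) = 1}

/-!
For a clique `K` the linear form `ℓ_K(x) = -x₀ + 2 ∑_{i ∈ K} xᵢ` is `±1` at every vertex of `H(G)`,
because a stable set meets a clique in at most one vertex; hence `ε ℓ_K ≤ 1` on `H(G)` and
`[ε, K]` is where equality holds. The form is modular in `K`, and `A ∪ U`, `B ∪ U` have union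
`A ∪ B ∪ U` and intersection `(A ∩ B) ∪ U`, all four being cliques since `A ∪ B ⊆ C`. So
`ε ℓ_{A∪U} + ε ℓ_{B∪U} = ε ℓ_{(A∩B)∪U} + ε ℓ_{A∪B∪U}`, a sum of four quantities bounded by `1`,
and one side equals `2` exactly when the other does.
-/

open Finset

lemma SimpleGraph.isClique_union_union {V : Type*} [DecidableEq V] {G : SimpleGraph V}
    {s t u : Finset V}
    (hst : G.IsClique (↑(s ∪ t) : Set V)) (hsu : G.IsClique (↑(s ∪ u) : Set V))
    (htu : G.IsClique (↑(t ∪ u) : Set V)) : G.IsClique (↑(s ∪ t ∪ u) : Set V) := by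
  rw [coe_union, SimpleGraph.IsClique, Set.pairwise_union]
  refine ⟨hst, htu.subset (by simp), fun a ha b hb hab => ?_⟩
  have hadj : G.Adj a b := by
    rcases mem_union.mp (mem_coe.mp ha) with ha | ha
    · exact hsu (by simp [ha]) (by simp [mem_coe.mp hb]) hab
    · exact htu (by simp [ha]) (by simp [mem_coe.mp hb]) hab
  exact ⟨hadj, hadj.symm⟩

lemma card_inter_le_one_of_isClique_of_isStable {n : ℕ} {G : SimpleGraph (Fin n)}
    {K I : Finset (Fin n)} (hK : G.IsClique (↑K : Set (Fin n))) (hI : IsStable G I) :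
    #(K ∩ I) ≤ 1 :=
  card_le_one.mpr fun a ha b hb => by
    simp only [mem_inter] at ha hb
    by_contra hab
    exact hI ha.2 hb.2 (hK ha.1 hb.1 hab)

section HansenForm

variable {n : ℕ}

noncomputable def hansenForm (K : Finset (Fin n)) : (Fin (n + 1) → ℝ) →ₗ[ℝ] ℝ :=
  -LinearMap.proj 0 + 2 • ∑ i ∈ K, LinearMap.proj i.succ

@[simp]
lemma hansenForm_apply (K : Finset (Fin n)) (x : Fin (n + 1) → ℝ) :
    hansenForm K x = -(x 0) + 2 * ∑ i ∈ K, x i.succ := by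
  simp [hansenForm]

lemma hansenForm_hansenVert (K I : Finset (Fin n)) :
    hansenForm K (hansenVert I) = 2 * #(K ∩ I) - 1 := by
  simp only [hansenForm_apply, hansenVert, Fin.cases_zero, Fin.cases_succ, sum_ite_mem,
    sum_const, nsmul_eq_mul, mul_one]
  ring

lemma hansenForm_union_add_inter (K L : Finset (Fin n)) (x : Fin (n + 1) → ℝ) :
    hansenForm (K ∪ L) x + hansenForm (K ∩ L) x = hansenForm K x + hansenForm L x := by
  simp only [hansenForm_apply]
  linarith [sum_union_inter (s₁ := K) (s₂ := L) (f := fun i => x i.succ)]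

lemma hansenForm_mem_Icc {G : SimpleGraph (Fin n)} {K : Finset (Fin n)}
    (hK : G.IsClique (↑K : Set (Fin n))) {x : Fin (n + 1) → ℝ} (hx : x ∈ hansenPolytope G) :
    hansenForm K x ∈ Set.Icc (-1) 1 := by
  refine convexHull_min ?_ ((convex_Icc _ _).linear_preimage (hansenForm K)) hx
  rintro _ ⟨I, hI, rfl | rfl⟩ <;>
  · have h := card_inter_le_one_of_isClique_of_isStable hK hI
    simp only [Set.mem_preimage, map_neg, hansenForm_hansenVert]
    interval_cases #(K ∩ I) <;> norm_num

lemma mul_hansenForm_le_one {G : SimpleGraph (Fin n)} {K : Finset (Fin n)}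
    (hK : G.IsClique (↑K : Set (Fin n))) {ε : ℝ} (hε : |ε| ≤ 1) {x : Fin (n + 1) → ℝ}
    (hx : x ∈ hansenPolytope G) : ε * hansenForm K x ≤ 1 := by
  calc ε * hansenForm K x ≤ |ε * hansenForm K x| := le_abs_self _
    _ = |ε| * |hansenForm K x| := abs_mul _ _
    _ ≤ 1 := mul_le_one₀ hε (abs_nonneg _) (abs_le.mpr (hansenForm_mem_Icc hK hx))

lemma mem_hFace {G : SimpleGraph (Fin n)} {ε : ℝ} {K : Finset (Fin n)} {x : Fin (n + 1) → ℝ} :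
    x ∈ hFace G ε K ↔ x ∈ hansenPolytope G ∧ ε * hansenForm K x = 1 := by
  simp [hFace]

end HansenForm

lemma eq_and_eq_iff_of_add_eq_add {a b c d m : ℝ} (ha : a ≤ m) (hb : b ≤ m) (hc : c ≤ m)
    (hd : d ≤ m) (h : a + b = c + d) : a = m ∧ b = m ↔ c = m ∧ d = m := by
  constructor <;> rintro ⟨h₁, h₂⟩ <;> constructor <;> linarith

theorem hFace_intersection_same_sign {n : ℕ} (G : SimpleGraph (Fin n))
    (C : Finset (Fin n)) (hC : G.IsClique (↑C : Set (Fin n)))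
    (A B U : Finset (Fin n)) (hA : A ⊆ C) (hB : B ⊆ C)
    (hAU : G.IsClique (↑(A ∪ U) : Set (Fin n)))
    (hBU : G.IsClique (↑(B ∪ U) : Set (Fin n)))
    (ε : ℝ) (hε : ε = 1 ∨ ε = -1) :
    hFace G ε (A ∪ U) ∩ hFace G ε (B ∪ U) =
      hFace G ε ((A ∩ B) ∪ U) ∩ hFace G ε (A ∪ B ∪ U) := by
  have hε₁ : |ε| ≤ 1 := by rcases hε with rfl | rfl <;> norm_num
  have hABU : G.IsClique (↑(A ∪ B ∪ U) : Set (Fin n)) :=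
    SimpleGraph.isClique_union_union (hC.subset (by exact_mod_cast union_subset hA hB)) hAU hBU
  have hIU : G.IsClique (↑(A ∩ B ∪ U) : Set (Fin n)) :=
    hAU.subset (by gcongr; exact inter_subset_left)
  ext x
  simp only [Set.mem_inter_iff, mem_hFace]
  by_cases hx : x ∈ hansenPolytope G
  · have hmod : ε * hansenForm (A ∪ U) x + ε * hansenForm (B ∪ U) x =
        ε * hansenForm (A ∩ B ∪ U) x + ε * hansenForm (A ∪ B ∪ U) x := by
      rw [← mul_add, ← mul_add, ← hansenForm_union_add_inter, ← union_union_distrib_right,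
        ← inter_union_distrib_right, add_comm]
    simpa only [hx, true_and] using eq_and_eq_iff_of_add_eq_add
      (mul_hansenForm_le_one hAU hε₁ hx) (mul_hansenForm_le_one hBU hε₁ hx)
      (mul_hansenForm_le_one hIU hε₁ hx) (mul_hansenForm_le_one hABU hε₁ hx) hmod
  · simp [hx]
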